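/- arXiv:2601.13249 — 8 statements merged into one kernel-verified Lean document; each statement's English description precedes it below -/
import Mathlib

section
/- For nonnegative real numbers p12, p13, p14, p23, p24, p34, the three triangle inequalities √(p12·p34) ≤ √(p13·p24) + √(p14·p23), √(p13·p24) ≤ √(p12·p34) + √(p14·p23), and √(p14·p23) ≤ √(p12·p34) + √(p13·p24) hold if and only if the 4×4 symmetric matrix with zero diagonal and off-diagonal entries p_{ij} (for i<j, symmetrized) has at most one positive eigenvalue. -/
/-! With `x = √(p12 p34)`, `y = √(p13 p24)`, `z = √(p14 p23)`, the determinant of `M` is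
`x⁴ + y⁴ + z⁴ - 2(x²y² + y²z² + z²x²) = -(x+y+z)(y+z-x)(x+z-y)(x+y-z)`, so the triangle
inequalities say exactly that `det M ≤ 0`. On the spectral side the eigenvalues `λᵢ` of `M` satisfy
`∑ λᵢ = tr M = 0` and `∑ λᵢ³ = tr M³ ≥ 0`, the latter because the entries are nonnegative. For four
such reals, `∏ λᵢ ≤ 0` holds iff at most one of them is positive: if `c, d > 0` and `abcd ≤ 0`,
then `ab ≤ 0` and `∑ λᵢ³ = 3(a+b)(cd - ab) < 0`. -/

open Matrix Finset

theorem Matrix.IsHermitian.trace_pow_eq_sum_eigenvalues_pow {𝕜 n : Type*} [RCLike 𝕜] [Fintype n]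
    [DecidableEq n] {A : Matrix n n 𝕜} (hA : A.IsHermitian) (k : ℕ) :
    (A ^ k).trace = ∑ i, (hA.eigenvalues i : 𝕜) ^ k := by
  conv_lhs => rw [hA.spectral_theorem, ← map_pow, Unitary.conjStarAlgAut_apply, trace_mul_cycle,
    Unitary.coe_star_mul_self, one_mul, diagonal_pow, trace_diagonal]
  simp

section HollowSymmetric

variable {R : Type*} [CommRing R] (a b c d e f : R)

theorem trace_hollowSymm4 :
    (!![0, a, b, c; a, 0, d, e; b, d, 0, f; c, e, f, 0] : Matrix (Fin 4) (Fin 4) R).trace = 0 := by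
  simp [trace, Fin.sum_univ_four]

theorem trace_pow_three_hollowSymm4 :
    ((!![0, a, b, c; a, 0, d, e; b, d, 0, f; c, e, f, 0] : Matrix (Fin 4) (Fin 4) R) ^ 3).trace =
      6 * (a * b * d + a * c * e + b * c * f + d * e * f) := by
  simp [trace, pow_succ, Fin.sum_univ_four]
  ring

theorem det_hollowSymm4 :
    (!![0, a, b, c; a, 0, d, e; b, d, 0, f; c, e, f, 0] : Matrix (Fin 4) (Fin 4) R).det =
      (a * f) ^ 2 + (b * e) ^ 2 + (c * d) ^ 2
        - 2 * (a * f * (b * e) + b * e * (c * d) + c * d * (a * f)) := by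
  simp [det_succ_row_zero, Fin.sum_univ_succ, Fin.succAbove]
  ring

end HollowSymmetric

theorem isHermitian_hollowSymm4 (a b c d e f : ℝ) :
    (!![0, a, b, c; a, 0, d, e; b, d, 0, f; c, e, f, 0] : Matrix (Fin 4) (Fin 4) ℝ).IsHermitian := by
  ext i j
  fin_cases i <;> fin_cases j <;> rfl

theorem triangle_iff_quartic_nonpos {x y z : ℝ} (hx : 0 ≤ x) (hy : 0 ≤ y) (hz : 0 ≤ z) :
    (x ≤ y + z ∧ y ≤ x + z ∧ z ≤ x + y) ↔
      (x ^ 2) ^ 2 + (y ^ 2) ^ 2 + (z ^ 2) ^ 2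
        - 2 * (x ^ 2 * y ^ 2 + y ^ 2 * z ^ 2 + z ^ 2 * x ^ 2) ≤ 0 := by
  have heron : (x ^ 2) ^ 2 + (y ^ 2) ^ 2 + (z ^ 2) ^ 2
      - 2 * (x ^ 2 * y ^ 2 + y ^ 2 * z ^ 2 + z ^ 2 * x ^ 2) =
        -((x + y + z) * (y + z - x) * (x + z - y) * (x + y - z)) := by
    ring
  rw [heron, neg_nonpos]
  constructor
  · rintro ⟨h₁, h₂, h₃⟩
    have := add_nonneg (add_nonneg hx hy) hz
    exact mul_nonneg (mul_nonneg (mul_nonneg this (by linarith)) (by linarith)) (by linarith)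
  · intro h
    refine ⟨?_, ?_, ?_⟩ <;> by_contra! hlt
    · nlinarith [mul_pos (mul_pos (by linarith : 0 < x + y + z) (by linarith : 0 < x + z - y))
        (by linarith : 0 < x + y - z)]
    · nlinarith [mul_pos (mul_pos (by linarith : 0 < x + y + z) (by linarith : 0 < y + z - x))
        (by linarith : 0 < x + y - z)]
    · nlinarith [mul_pos (mul_pos (by linarith : 0 < x + y + z) (by linarith : 0 < y + z - x))
        (by linarith : 0 < x + z - y)]

theorem sum_pow_three_neg_of_prod_nonpos {a b c d : ℝ} (hsum : a + b + c + d = 0) (hc : 0 < c)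
    (hd : 0 < d) (hprod : a * b * c * d ≤ 0) : a ^ 3 + b ^ 3 + c ^ 3 + d ^ 3 < 0 := by
  have hcd : 0 < c * d := mul_pos hc hd
  have hab : a * b ≤ 0 := by
    rw [mul_assoc (a * b)] at hprod
    exact nonpos_of_mul_nonpos_left hprod hcd
  obtain rfl : a = -b - c - d := by linarith
  have : (-b - c - d) ^ 3 + b ^ 3 + c ^ 3 + d ^ 3 =
      3 * (-(c + d)) * (c * d - (-b - c - d) * b) := by
    ring
  rw [this]
  exact mul_neg_of_neg_of_pos (by linarith) (by linarith)

theorem card_filter_pos_le_one_iff_of_monotone {l : Fin 4 → ℝ} (hl : Monotone l) :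
    #{i | 0 < l i} ≤ 1 ↔ l 2 ≤ 0 := by
  constructor
  · intro h
    by_contra! h₂
    have h₃ : 0 < l 3 := h₂.trans_le (hl (by decide))
    have : ({2, 3} : Finset (Fin 4)) ⊆ ({i | 0 < l i} : Finset (Fin 4)) := by
      simp [insert_subset_iff, h₂, h₃]
    simpa using (card_le_card this).trans h
  · intro h₂
    have eq_three_of_pos : ∀ k : Fin 4, 0 < l k → k = 3 := fun k hk => by
      by_contra hne
      have : k ≤ 2 := by omega
      exact (hk.trans_le (hl this)).not_ge h₂
    refine card_le_one.mpr fun i hi j hj => ?_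
    simp only [mem_filter, mem_univ, true_and] at hi hj
    rw [eq_three_of_pos i hi, eq_three_of_pos j hj]

theorem prod_nonpos_iff_of_monotone {l : Fin 4 → ℝ} (hl : Monotone l) (hsum : ∑ i, l i = 0)
    (hcube : 0 ≤ ∑ i, l i ^ 3) : ∏ i, l i ≤ 0 ↔ l 2 ≤ 0 := by
  rw [Fin.sum_univ_four] at hsum hcube
  rw [Fin.prod_univ_four]
  have h₀₁ : l 0 ≤ l 1 := hl (by decide)
  have h₁₂ : l 1 ≤ l 2 := hl (by decide)
  have h₂₃ : l 2 ≤ l 3 := hl (by decide)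
  constructor
  · intro hprod
    by_contra! h₂
    exact (sum_pow_three_neg_of_prod_nonpos hsum h₂ (h₂.trans_le h₂₃) hprod).not_ge hcube
  · intro h₂
    have h₁ : l 1 ≤ 0 := h₁₂.trans h₂
    have h₀ : l 0 ≤ 0 := h₀₁.trans h₁
    exact mul_nonpos_of_nonpos_of_nonneg
      (mul_nonpos_of_nonneg_of_nonpos (mul_nonneg_of_nonpos_of_nonpos h₀ h₁) h₂) (by linarith)

theorem card_filter_pos_le_one_iff_prod_nonpos {l : Fin 4 → ℝ} (hsum : ∑ i, l i = 0)
    (hcube : 0 ≤ ∑ i, l i ^ 3) : #{i | 0 < l i} ≤ 1 ↔ ∏ i, l i ≤ 0 := by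
  set σ := Tuple.sort l
  have hcard : #{i | 0 < l (σ i)} = #{i | 0 < l i} := by
    simp only [card_filter]
    exact Equiv.sum_comp σ (fun i => if 0 < l i then 1 else 0)
  rw [← Equiv.sum_comp σ] at hsum
  rw [← Equiv.sum_comp σ (fun i => l i ^ 3)] at hcube
  have hmono : Monotone fun i => l (σ i) := Tuple.monotone_sort l
  rw [← hcard, ← Equiv.prod_comp σ]
  exact (card_filter_pos_le_one_iff_of_monotone hmono).trans
    (prod_nonpos_iff_of_monotone hmono hsum hcube).symm

theorem stmt0 (p12 p13 p14 p23 p24 p34 : ℝ)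
    (h12 : 0 ≤ p12) (h13 : 0 ≤ p13) (h14 : 0 ≤ p14)
    (h23 : 0 ≤ p23) (h24 : 0 ≤ p24) (h34 : 0 ≤ p34) :
    (Real.sqrt (p12 * p34) ≤ Real.sqrt (p13 * p24) + Real.sqrt (p14 * p23) ∧
     Real.sqrt (p13 * p24) ≤ Real.sqrt (p12 * p34) + Real.sqrt (p14 * p23) ∧
     Real.sqrt (p14 * p23) ≤ Real.sqrt (p12 * p34) + Real.sqrt (p13 * p24)) ↔
    (∀ hM : (!![0, p12, p13, p14;
                p12, 0, p23, p24;
                p13, p23, 0, p34;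
                p14, p24, p34, 0] : Matrix (Fin 4) (Fin 4) ℝ).IsHermitian,
      (Finset.univ.filter fun i => 0 < hM.eigenvalues i).card ≤ 1) := by
  set M : Matrix (Fin 4) (Fin 4) ℝ :=
    !![0, p12, p13, p14; p12, 0, p23, p24; p13, p23, 0, p34; p14, p24, p34, 0] with hMdef
  have hM : M.IsHermitian := isHermitian_hollowSymm4 ..
  have hsum : ∑ i, hM.eigenvalues i = 0 := by
    simpa [hMdef, trace_hollowSymm4] using hM.trace_eq_sum_eigenvalues.symm
  have hcube : 0 ≤ ∑ i, hM.eigenvalues i ^ 3 := by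
    have := hM.trace_pow_eq_sum_eigenvalues_pow 3
    simp only [hMdef, trace_pow_three_hollowSymm4, RCLike.ofReal_real_eq_id, id] at this
    rw [← this]
    positivity
  have hdet : ∏ i, hM.eigenvalues i = M.det := by
    simpa using hM.det_eq_prod_eigenvalues.symm
  rw [triangle_iff_quartic_nonpos (Real.sqrt_nonneg _) (Real.sqrt_nonneg _) (Real.sqrt_nonneg _),
    Real.sq_sqrt (mul_nonneg h12 h34), Real.sq_sqrt (mul_nonneg h13 h24),
    Real.sq_sqrt (mul_nonneg h14 h23), ← det_hollowSymm4, ← hMdef, ← hdet,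
    ← card_filter_pos_le_one_iff_prod_nonpos hsum hcube]
  exact ⟨fun h _ => h, fun h => h hM⟩
end

section
/- Every 4×4 principal submatrix of the 5×5 symmetric matrix with zero diagonal, entry 4 in positions (1,2) and (2,1), and entry 1 in all other off-diagonal positions, has at most one positive eigenvalue. -/
/-!
Deleting row and column 1 or 2 leaves the adjacency matrix of `K₄`; deleting 3, 4 or 5 leaves the
same matrix with the edge `{1, 2}` given weight 4. Their characteristic polynomials are
`(X - 3)(X + 1)³` and `X(X - 5)(X + 1)(X + 4)`, and the eigenvalues of a Hermitian matrix are the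
roots of its characteristic polynomial counted with multiplicity, so each has exactly one positive
eigenvalue.
-/

open Matrix Polynomial Finset

section
variable {𝕜 n : Type*} [RCLike 𝕜] [Fintype n] [DecidableEq n] {A : Matrix n n 𝕜}

lemma Matrix.IsHermitian.map_eigenvalues_eq_of_charpoly_eq (hA : A.IsHermitian)
    {s : Multiset ℝ} (h : A.charpoly = (s.map fun μ : ℝ => X - C (μ : 𝕜)).prod) :
    univ.val.map hA.eigenvalues = s := by
  have hs : (s.map fun μ : ℝ => X - C (μ : 𝕜)) = (s.map (↑)).map fun μ : 𝕜 => X - C μ := by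
    rw [Multiset.map_map]; rfl
  have hroots := hA.roots_charpoly_eq_eigenvalues
  rw [h, hs, roots_multiset_prod_X_sub_C, ← Multiset.map_map] at hroots
  exact Multiset.map_injective RCLike.ofReal_injective hroots.symm

lemma Matrix.IsHermitian.card_filter_eigenvalues_of_charpoly_eq (hA : A.IsHermitian)
    {s : Multiset ℝ} (h : A.charpoly = (s.map fun μ : ℝ => X - C (μ : 𝕜)).prod)
    (p : ℝ → Prop) [DecidablePred p] :
    #{i | p (hA.eigenvalues i)} = Multiset.card (s.filter p) := by
  rw [← hA.map_eigenvalues_eq_of_charpoly_eq h, Multiset.filter_map, Multiset.card_map]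
  rfl

end

def adjK₄ : Matrix (Fin 4) (Fin 4) ℝ :=
  !![0, 1, 1, 1;
     1, 0, 1, 1;
     1, 1, 0, 1;
     1, 1, 1, 0]

def adjK₄WeightedEdge : Matrix (Fin 4) (Fin 4) ℝ :=
  !![0, 4, 1, 1;
     4, 0, 1, 1;
     1, 1, 0, 1;
     1, 1, 1, 0]

lemma charpoly_adjK₄ :
    adjK₄.charpoly = (({3, -1, -1, -1} : Multiset ℝ).map fun μ => X - C μ).prod := by
  rw [adjK₄, charpoly, det_succ_row_zero]
  simp [Fin.sum_univ_succ, det_fin_three, charmatrix_apply, Fin.succAbove, C_ofNat]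
  ring

lemma charpoly_adjK₄WeightedEdge :
    adjK₄WeightedEdge.charpoly = (({5, 0, -1, -4} : Multiset ℝ).map fun μ => X - C μ).prod := by
  rw [adjK₄WeightedEdge, charpoly, det_succ_row_zero]
  simp [Fin.sum_univ_succ, det_fin_three, charmatrix_apply, Fin.succAbove, C_ofNat]
  ring

lemma submatrix_succAbove_eq_adjK₄_or_adjK₄WeightedEdge (i : Fin 5) :
    let N : Matrix (Fin 5) (Fin 5) ℝ :=
      !![0, 4, 1, 1, 1;
         4, 0, 1, 1, 1;
         1, 1, 0, 1, 1;
         1, 1, 1, 0, 1;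
         1, 1, 1, 1, 0]
    N.submatrix i.succAbove i.succAbove = adjK₄ ∨
      N.submatrix i.succAbove i.succAbove = adjK₄WeightedEdge := by
  fin_cases i <;> [left; left; right; right; right] <;>
    (ext a b; fin_cases a <;> fin_cases b <;> rfl)

theorem stmt3 :
    ∀ i : Fin 5,
    ∀ hN : ((!![0, 4, 1, 1, 1;
                4, 0, 1, 1, 1;
                1, 1, 0, 1, 1;
                1, 1, 1, 0, 1;
                1, 1, 1, 1, 0] : Matrix (Fin 5) (Fin 5) ℝ).submatrix
                  i.succAbove i.succAbove).IsHermitian,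
      (Finset.univ.filter fun m => 0 < hN.eigenvalues m).card ≤ 1 := by
  intro i hN
  rcases submatrix_succAbove_eq_adjK₄_or_adjK₄WeightedEdge i with h | h
  · rw [hN.card_filter_eigenvalues_of_charpoly_eq (h ▸ charpoly_adjK₄)]
    norm_num
  · rw [hN.card_filter_eigenvalues_of_charpoly_eq (h ▸ charpoly_adjK₄WeightedEdge)]
    norm_num
end

section
/- For the Hessian matrix of each partial derivative ∂₁f, ∂₂f, ∂₃f of the cubic f = 14x₁³ + 6x₁²x₂ + 24x₁²x₃ + 12x₁x₂x₃ + 6x₁x₃² + 3x₂x₃², namely the matrices [[84,12,48],[12,0,12],[48,12,12]], [[12,0,12],[0,0,0],[12,0,6]], and [[48,12,12],[12,0,6],[12,6,0]], each has exactly one positive eigenvalue. -/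
/-!
Each of the three matrices is singular, and the sum `σ₂` of its principal `2 × 2` minors is
negative. Comparing the characteristic polynomial `X³ - σ₁X² + σ₂X - det` with `∏ (X - λᵢ)`, one
eigenvalue is `0` and the other two have product `σ₂ < 0`, so exactly one of them is positive.
-/

open Polynomial Matrix Finset

theorem Matrix.charpoly_fin_three {R : Type*} [CommRing R] (A : Matrix (Fin 3) (Fin 3) R) :
    A.charpoly = X ^ 3 - C A.trace * X ^ 2
      + C (A 0 0 * A 1 1 - A 0 1 * A 1 0 + A 0 0 * A 2 2 - A 0 2 * A 2 0
        + A 1 1 * A 2 2 - A 1 2 * A 2 1) * X - C A.det := by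
  simp [charpoly, det_fin_three, trace_fin_three]
  ring

theorem Real.card_filter_pos_fin_three_eq_one {e : Fin 3 → ℝ} (hprod : e 0 * e 1 * e 2 = 0)
    (hpairs : e 0 * e 1 + e 0 * e 2 + e 1 * e 2 < 0) : #{i | 0 < e i} = 1 := by
  obtain h | h | h : e 0 = 0 ∨ e 1 = 0 ∨ e 2 = 0 := by simpa [or_assoc] using hprod
  all_goals
    rw [card_filter, Fin.sum_univ_three]
    simp only [h, zero_mul, mul_zero, zero_add, add_zero] at hpairs
    split_ifs <;> nlinarith

theorem Matrix.IsHermitian.card_filter_pos_eigenvalues_eq_one {A : Matrix (Fin 3) (Fin 3) ℝ}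
    (hA : A.IsHermitian) (hdet : A.det = 0)
    (hminors : A 0 0 * A 1 1 - A 0 1 * A 1 0 + A 0 0 * A 2 2 - A 0 2 * A 2 0
        + A 1 1 * A 2 2 - A 1 2 * A 2 1 < 0) :
    #{i | 0 < hA.eigenvalues i} = 1 := by
  have heval (x : ℝ) := congrArg (eval x) (hA.charpoly_eq.symm.trans A.charpoly_fin_three)
  simp only [Real.ringHom_apply, Fin.prod_univ_three, eval_mul, eval_sub, eval_add, eval_pow,
    eval_X, eval_C, hdet] at heval
  have hzero := heval 0
  have hone := heval 1
  have hneg := heval (-1)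
  apply Real.card_filter_pos_fin_three_eq_one
  · linear_combination -hzero
  · linear_combination (hone - hneg) / 2 + hminors

/-- Each of the Hessian matrices of `∂₁f`, `∂₂f`, `∂₃f` for
`f = 14x₁³ + 6x₁²x₂ + 24x₁²x₃ + 12x₁x₂x₃ + 6x₁x₃² + 3x₂x₃²`
has exactly one positive eigenvalue. -/
theorem stmt5 :
    (∀ h : (!![84, 12, 48; 12, 0, 12; 48, 12, 12] : Matrix (Fin 3) (Fin 3) ℝ).IsHermitian,
      (Finset.univ.filter fun i => 0 < h.eigenvalues i).card = 1) ∧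
    (∀ h : (!![12, 0, 12; 0, 0, 0; 12, 0, 6] : Matrix (Fin 3) (Fin 3) ℝ).IsHermitian,
      (Finset.univ.filter fun i => 0 < h.eigenvalues i).card = 1) ∧
    (∀ h : (!![48, 12, 12; 12, 0, 6; 12, 6, 0] : Matrix (Fin 3) (Fin 3) ℝ).IsHermitian,
      (Finset.univ.filter fun i => 0 < h.eigenvalues i).card = 1) := by
  refine ⟨fun h => h.card_filter_pos_eigenvalues_eq_one ?_ ?_,
    fun h => h.card_filter_pos_eigenvalues_eq_one ?_ ?_,
    fun h => h.card_filter_pos_eigenvalues_eq_one ?_ ?_⟩ <;>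
  simp [det_fin_three] <;> norm_num
end

section
/- For convex bodies A and B in ℝ^d, the function t ↦ vol((1−t)A + tB)^{1/d} is concave on [0,1] (the Brunn–Minkowski inequality in the form vol(A+B)^{1/d} ≥ vol(A)^{1/d} + vol(B)^{1/d}). -/
/-!
The multiplicative Brunn–Minkowski inequality `μ A ^ (1 - t) * μ B ^ t ≤ μ ((1 - t) • A + t • B)`
holds for all compact sets and is proved by induction on the dimension. Slicing `ℝ × E` along the
first coordinate, the induction hypothesis says that the slice volumes of `A`, `B` and
`(1 - t) • A + t • B` satisfy the hypothesis of the one-dimensional Prékopa–Leindler inequality,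
whose conclusion is, by Fubini, the inequality on `ℝ × E`. Prékopa–Leindler on `ℝ` follows from
the one-dimensional Brunn–Minkowski inequality `|S| + |T| ≤ |S + T|` applied to superlevel sets
and integrated with the layer-cake formula, after rescaling `f` and `g` to have supremum `1`.

Since volume is homogeneous of degree `d`, the multiplicative form applied to `A / |A|^(1/d)` and
`B / |B|^(1/d)` with weight `t = |B|^(1/d) / (|A|^(1/d) + |B|^(1/d))` gives the additive form for
`|·|^(1/d)`. For convex `A` and `B`, `s ↦ (1 - s) • A + s • B` turns convex combinations of
parameters into Minkowski combinations, so the additive form yields concavity.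
-/

open MeasureTheory Pointwise Set Module
open scoped ENNReal

theorem ENNReal.rpow_mul_rpow_le_add {t : ℝ} (ht0 : 0 < t) (ht1 : t < 1) (a b : ℝ≥0∞) :
    a ^ (1 - t) * b ^ t ≤ ENNReal.ofReal (1 - t) * a + ENNReal.ofReal t * b := by
  have h1t : 0 < 1 - t := by linarith
  have := ENNReal.young_inequality (a ^ (1 - t)) (b ^ t)
    (Real.HolderConjugate.inv_inv h1t ht0 (by ring))
  rwa [ENNReal.rpow_rpow_inv h1t.ne', ENNReal.rpow_rpow_inv ht0.ne',
    ENNReal.ofReal_inv_of_pos h1t, ENNReal.ofReal_inv_of_pos ht0, ENNReal.div_eq_inv_mul,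
    ENNReal.div_eq_inv_mul, inv_inv, inv_inv] at this

theorem isLUB_range_inv_mul {ι : Type*} {φ : ι → ℝ} {M : ℝ} (hM : IsLUB (range φ) M)
    (hM0 : 0 < M) : IsLUB (range fun x => M⁻¹ * φ x) 1 := by
  have := hM.mul_left (inv_nonneg.2 hM0.le)
  rwa [inv_mul_cancel₀ hM0.ne', ← range_comp] at this

theorem MeasureTheory.lintegral_ofReal_const_mul {α : Type*} [MeasurableSpace α]
    (μ : Measure α) {c : ℝ} (hc : 0 ≤ c) (φ : α → ℝ) :
    ∫⁻ x, ENNReal.ofReal (c * φ x) ∂μ = ENNReal.ofReal c * ∫⁻ x, ENNReal.ofReal (φ x) ∂μ := by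
  simp_rw [ENNReal.ofReal_mul hc]
  exact lintegral_const_mul' _ _ ENNReal.ofReal_ne_top

theorem MeasureTheory.measure_le_measure_add_of_nonempty_right {G : Type*} [AddGroup G]
    [MeasurableSpace G] [MeasurableAdd G] {μ : Measure G} [μ.IsAddRightInvariant] (A : Set G)
    {B : Set G} (hB : B.Nonempty) : μ A ≤ μ (A + B) := by
  obtain ⟨b, hb⟩ := hB
  calc μ A = μ (A + {b}) := by rw [add_singleton, image_add_right, measure_preimage_add_right]
    _ ≤ μ (A + B) := measure_mono (add_subset_add_left (singleton_subset_iff.2 hb))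

theorem MeasureTheory.measure_le_measure_add_of_nonempty_left {G : Type*} [AddGroup G]
    [MeasurableSpace G] [MeasurableAdd G] {μ : Measure G} [μ.IsAddLeftInvariant] {A : Set G}
    (hA : A.Nonempty) (B : Set G) : μ B ≤ μ (A + B) := by
  obtain ⟨a, ha⟩ := hA
  calc μ B = μ ({a} + B) := by rw [singleton_add, image_add_left, measure_preimage_add]
    _ ≤ μ (A + B) := measure_mono (add_subset_add_right (singleton_subset_iff.2 ha))

namespace Real

theorem volume_add_volume_le_volume_add_of_isCompact {K L : Set ℝ} (hK : K.Nonempty)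
    (hKc : IsCompact K) (hL : L.Nonempty) (hLc : IsCompact L) :
    volume K + volume L ≤ volume (K + L) := by
  set a := sSup K
  set b := sInf L
  -- `K + b` and `a + L` lie in `K + L` and meet only at `a + b`.
  have h_inter : (K + {b}) ∩ ({a} + L) ⊆ {a + b} := by
    rintro _ ⟨⟨k, hk, _, rfl, rfl⟩, ⟨_, rfl, l, hl, hlk⟩⟩
    have : k ≤ a := le_csSup hKc.bddAbove hk
    have : b ≤ l := csInf_le hLc.bddBelow hl
    rw [mem_singleton_iff]
    linarith
  calc volume K + volume L = volume (K + {b}) + volume ({a} + L) := by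
        rw [add_singleton, image_add_right, measure_preimage_add_right, singleton_add,
          image_add_left, measure_preimage_add]
    _ = volume ((K + {b}) ∪ ({a} + L)) + volume ((K + {b}) ∩ ({a} + L)) :=
        (measure_union_add_inter _ (isCompact_singleton.add hLc).measurableSet).symm
    _ ≤ volume (K + L) + 0 := by
        gcongr
        · exact union_subset (add_subset_add_left (singleton_subset_iff.2 (hLc.sInf_mem hL)))
            (add_subset_add_right (singleton_subset_iff.2 (hKc.sSup_mem hK)))
        · exact (measure_mono h_inter).trans (measure_singleton _).le
    _ = volume (K + L) := add_zero _

theorem volume_add_volume_le_volume_add {S T : Set ℝ} (hS : S.Nonempty) (hSm : MeasurableSet S)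
    (hT : T.Nonempty) (hTm : MeasurableSet T) : volume S + volume T ≤ volume (S + T) := by
  obtain ⟨x, hx⟩ := hS
  obtain ⟨y, hy⟩ := hT
  rw [hSm.measure_eq_iSup_isCompact, hTm.measure_eq_iSup_isCompact]
  simp only [iSup_and']
  refine ENNReal.biSup_add_biSup_le' ⟨∅, empty_subset _, isCompact_empty⟩
    ⟨∅, empty_subset _, isCompact_empty⟩ fun K ⟨hKS, hK⟩ L ⟨hLT, hL⟩ => ?_
  calc volume K + volume L ≤ volume (insert x K) + volume (insert y L) := by
        gcongr <;> exact subset_insert _ _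
    _ ≤ volume (insert x K + insert y L) :=
        volume_add_volume_le_volume_add_of_isCompact (insert_nonempty _ _) (hK.insert x)
          (insert_nonempty _ _) (hL.insert y)
    _ ≤ volume (S + T) := measure_mono (add_subset_add (insert_subset hx hKS) (insert_subset hy hLT))

theorem volume_smul_of_nonneg {c : ℝ} (hc : 0 ≤ c) (S : Set ℝ) :
    volume (c • S) = ENNReal.ofReal c * volume S := by
  rw [Measure.addHaar_smul_of_nonneg _ hc, finrank_self, pow_one]

theorem prekopa_leindler_superlevel {t : ℝ} (ht0 : 0 < t) (ht1 : t < 1) {f g h : ℝ → ℝ}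
    (hf : Measurable f) (hg : Measurable g) (hf1 : IsLUB (range f) 1) (hg1 : IsLUB (range g) 1)
    (hfgh : ∀ x y, f x ^ (1 - t) * g y ^ t ≤ h ((1 - t) * x + t * y)) {s : ℝ} (hs : 0 < s) :
    ENNReal.ofReal (1 - t) * volume {x | s < f x} + ENNReal.ofReal t * volume {y | s < g y} ≤
      volume {z | s ≤ h z} := by
  have h1t : 0 < 1 - t := by linarith
  rcases lt_or_ge s 1 with hs1 | hs1
  · obtain ⟨_, ⟨x, rfl⟩, hx, -⟩ := hf1.exists_between hs1
    obtain ⟨_, ⟨y, rfl⟩, hy, -⟩ := hg1.exists_between hs1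
    have hsub : (1 - t) • {x | s < f x} + t • {y | s < g y} ⊆ {z | s ≤ h z} := by
      rintro _ ⟨_, ⟨x, hx, rfl⟩, _, ⟨y, hy, rfl⟩, rfl⟩
      calc s = s ^ (1 - t) * s ^ t := by rw [← rpow_add hs]; simp
        _ ≤ f x ^ (1 - t) * g y ^ t :=
          mul_le_mul (rpow_le_rpow hs.le hx.le h1t.le) (rpow_le_rpow hs.le hy.le ht0.le)
            (rpow_nonneg hs.le _) (rpow_nonneg (hs.trans hx).le _)
        _ ≤ h ((1 - t) * x + t * y) := hfgh x y
    rw [← volume_smul_of_nonneg h1t.le, ← volume_smul_of_nonneg ht0.le]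
    refine (volume_add_volume_le_volume_add (show {x | s < f x}.Nonempty from ⟨x, hx⟩).smul_set
      ?_ (show {y | s < g y}.Nonempty from ⟨y, hy⟩).smul_set ?_).trans (measure_mono hsub)
    · exact (measurableSet_lt measurable_const hf).const_smul_of_ne_zero h1t.ne'
    · exact (measurableSet_lt measurable_const hg).const_smul_of_ne_zero ht0.ne'
  · have hfs : {x | s < f x} = ∅ :=
      eq_empty_of_forall_notMem fun x hx => (hf1.1 ⟨x, rfl⟩).not_gt (hs1.trans_lt hx)
    have hgs : {y | s < g y} = ∅ :=
      eq_empty_of_forall_notMem fun y hy => (hg1.1 ⟨y, rfl⟩).not_gt (hs1.trans_lt hy)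
    simp [hfs, hgs]

theorem prekopa_leindler_of_isLUB_one {t : ℝ} (ht0 : 0 < t) (ht1 : t < 1) {f g h : ℝ → ℝ}
    (hf : Measurable f) (hg : Measurable g) (hh : Measurable h) (hf0 : 0 ≤ f) (hg0 : 0 ≤ g)
    (hf1 : IsLUB (range f) 1) (hg1 : IsLUB (range g) 1)
    (hfgh : ∀ x y, f x ^ (1 - t) * g y ^ t ≤ h ((1 - t) * x + t * y)) :
    ENNReal.ofReal (1 - t) * (∫⁻ x, ENNReal.ofReal (f x)) +
        ENNReal.ofReal t * (∫⁻ x, ENNReal.ofReal (g x)) ≤ ∫⁻ x, ENNReal.ofReal (h x) := by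
  have hh0 (z : ℝ) : 0 ≤ h z := by
    have := hfgh z z
    rw [show (1 - t) * z + t * z = z by ring] at this
    exact (mul_nonneg (rpow_nonneg (hf0 z) _) (rpow_nonneg (hg0 z) _)).trans this
  have measurable_superlevel (φ : ℝ → ℝ) : Measurable fun s => volume {x | s < φ x} :=
    Antitone.measurable fun _ _ hs => measure_mono fun _ hx => hs.trans_lt hx
  calc ENNReal.ofReal (1 - t) * (∫⁻ x, ENNReal.ofReal (f x)) +
        ENNReal.ofReal t * (∫⁻ x, ENNReal.ofReal (g x))
      = ∫⁻ s in Ioi 0, (ENNReal.ofReal (1 - t) * volume {x | s < f x} +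
          ENNReal.ofReal t * volume {y | s < g y}) := by
        rw [lintegral_eq_lintegral_meas_lt volume (ae_of_all _ hf0) hf.aemeasurable,
          lintegral_eq_lintegral_meas_lt volume (ae_of_all _ hg0) hg.aemeasurable,
          lintegral_add_left ((measurable_superlevel f).const_mul _),
          lintegral_const_mul _ (measurable_superlevel f),
          lintegral_const_mul _ (measurable_superlevel g)]
    _ ≤ ∫⁻ s in Ioi 0, volume {z | s ≤ h z} :=
        setLIntegral_mono' measurableSet_Ioi fun _ hs =>
          prekopa_leindler_superlevel ht0 ht1 hf hg hf1 hg1 hfgh hs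
    _ = ∫⁻ z, ENNReal.ofReal (h z) :=
        (lintegral_eq_lintegral_meas_le volume (ae_of_all _ hh0) hh.aemeasurable).symm

theorem prekopa_leindler {t : ℝ} (ht0 : 0 < t) (ht1 : t < 1) {f g h : ℝ → ℝ}
    (hf : Measurable f) (hg : Measurable g) (hh : Measurable h) (hf0 : 0 ≤ f) (hg0 : 0 ≤ g)
    (hfb : BddAbove (range f)) (hgb : BddAbove (range g))
    (hfgh : ∀ x y, f x ^ (1 - t) * g y ^ t ≤ h ((1 - t) * x + t * y)) :
    (∫⁻ x, ENNReal.ofReal (f x)) ^ (1 - t) * (∫⁻ x, ENNReal.ofReal (g x)) ^ t ≤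
      ∫⁻ x, ENNReal.ofReal (h x) := by
  have h1t : 0 < 1 - t := by linarith
  obtain ⟨M, hM⟩ : ∃ M, IsLUB (range f) M := ⟨_, isLUB_csSup (range_nonempty f) hfb⟩
  obtain ⟨N, hN⟩ : ∃ N, IsLUB (range g) N := ⟨_, isLUB_csSup (range_nonempty g) hgb⟩
  obtain hM0 | hM0 := (show 0 ≤ M from (hf0 0).trans (hM.1 ⟨0, rfl⟩)).eq_or_lt
  · have : ∀ x, f x = 0 := fun x => le_antisymm (hM0 ▸ hM.1 ⟨x, rfl⟩) (hf0 x)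
    simp [this, ENNReal.zero_rpow_of_pos h1t]
  obtain hN0 | hN0 := (show 0 ≤ N from (hg0 0).trans (hN.1 ⟨0, rfl⟩)).eq_or_lt
  · have : ∀ y, g y = 0 := fun y => le_antisymm (hN0 ▸ hN.1 ⟨y, rfl⟩) (hg0 y)
    simp [this, ENNReal.zero_rpow_of_pos ht0]
  set c := M ^ (1 - t) * N ^ t
  have hc : 0 < c := mul_pos (rpow_pos_of_pos hM0 _) (rpow_pos_of_pos hN0 _)
  have key := prekopa_leindler_of_isLUB_one ht0 ht1 (hf.const_mul M⁻¹) (hg.const_mul N⁻¹)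
    (hh.const_mul c⁻¹) (fun x => mul_nonneg (inv_nonneg.2 hM0.le) (hf0 x))
    (fun y => mul_nonneg (inv_nonneg.2 hN0.le) (hg0 y))
    (isLUB_range_inv_mul hM hM0) (isLUB_range_inv_mul hN hN0) fun x y => by
      rw [mul_rpow (inv_nonneg.2 hM0.le) (hf0 x), mul_rpow (inv_nonneg.2 hN0.le) (hg0 y),
        inv_rpow hM0.le, inv_rpow hN0.le, mul_mul_mul_comm, ← mul_inv]
      exact mul_le_mul_of_nonneg_left (hfgh x y) (inv_nonneg.2 hc.le)
  have rescale {a : ℝ} (ha : 0 < a) (φ : ℝ → ℝ) : ∫⁻ x, ENNReal.ofReal (φ x) =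
      ENNReal.ofReal a * ∫⁻ x, ENNReal.ofReal (a⁻¹ * φ x) := by
    simp [← lintegral_ofReal_const_mul volume ha.le, mul_inv_cancel_left₀ ha.ne']
  calc (∫⁻ x, ENNReal.ofReal (f x)) ^ (1 - t) * (∫⁻ x, ENNReal.ofReal (g x)) ^ t
      = ENNReal.ofReal c * ((∫⁻ x, ENNReal.ofReal (M⁻¹ * f x)) ^ (1 - t) *
          (∫⁻ x, ENNReal.ofReal (N⁻¹ * g x)) ^ t) := by
        rw [rescale hM0 f, rescale hN0 g, ENNReal.mul_rpow_of_nonneg _ _ h1t.le,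
          ENNReal.mul_rpow_of_nonneg _ _ ht0.le, ENNReal.ofReal_rpow_of_pos hM0,
          ENNReal.ofReal_rpow_of_pos hN0, ENNReal.ofReal_mul (rpow_nonneg hM0.le _)]
        ring
    _ ≤ ENNReal.ofReal c * ∫⁻ x, ENNReal.ofReal (c⁻¹ * h x) := by
        gcongr
        exact (ENNReal.rpow_mul_rpow_le_add ht0 ht1 _ _).trans key
    _ = ∫⁻ x, ENNReal.ofReal (h x) := (rescale hc h).symm

end Real

theorem IsCompact.preimage_prodMk {α E : Type*} [TopologicalSpace α] [T1Space α]
    [TopologicalSpace E] {S : Set (α × E)} (hS : IsCompact S) (x : α) :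
    IsCompact (Prod.mk x ⁻¹' S) :=
  (isEmbedding_prodMkRight x).isInducing.isCompact_preimage
    (isClosedMap_prodMk_left x).isClosed_range hS

theorem smul_preimage_prodMk_add_smul_preimage_prodMk_subset {E : Type*} [AddCommGroup E]
    [Module ℝ E] (a b x y : ℝ) (A B : Set (ℝ × E)) :
    a • (Prod.mk x ⁻¹' A) + b • (Prod.mk y ⁻¹' B) ⊆
      Prod.mk (a * x + b * y) ⁻¹' (a • A + b • B) := by
  rintro _ ⟨_, ⟨u, hu, rfl⟩, _, ⟨v, hv, rfl⟩, rfl⟩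
  exact ⟨a • (x, u), smul_mem_smul_set hu, b • (y, v), smul_mem_smul_set hv, rfl⟩

def IsBrunnMinkowski {E : Type*} [AddCommGroup E] [Module ℝ E] [TopologicalSpace E]
    [MeasurableSpace E] (μ : Measure E) : Prop :=
  ∀ ⦃t : ℝ⦄, 0 < t → t < 1 → ∀ ⦃A B : Set E⦄, IsCompact A → IsCompact B →
    μ A ^ (1 - t) * μ B ^ t ≤ μ ((1 - t) • A + t • B)

namespace IsBrunnMinkowski

variable {E : Type*} [AddCommGroup E] [Module ℝ E] [TopologicalSpace E] [MeasurableSpace E]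

theorem of_subsingleton [Subsingleton E] (μ : Measure E) : IsBrunnMinkowski μ := by
  intro t ht0 ht1 A B _ _
  rcases A.eq_empty_or_nonempty with rfl | hA
  · simp [ENNReal.zero_rpow_of_pos (sub_pos.2 ht1)]
  rcases B.eq_empty_or_nonempty with rfl | hB
  · simp [ENNReal.zero_rpow_of_pos ht0]
  rw [(hA.smul_set.add hB.smul_set).eq_univ, hA.eq_univ, hB.eq_univ,
    ← ENNReal.rpow_add_of_nonneg _ _ (sub_pos.2 ht1).le ht0.le, sub_add_cancel, ENNReal.rpow_one]

theorem rpow_mul_rpow_le [ContinuousAdd E] [ContinuousConstSMul ℝ E] {μ : Measure E}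
    [IsFiniteMeasureOnCompacts μ] (hμ : IsBrunnMinkowski μ) {p : ℝ} (hp : 0 ≤ p) {t : ℝ}
    (ht0 : 0 < t) (ht1 : t < 1) {A B : Set E} (hA : IsCompact A) (hB : IsCompact B) :
    ((μ A).toReal ^ p) ^ (1 - t) * ((μ B).toReal ^ p) ^ t ≤
      (μ ((1 - t) • A + t • B)).toReal ^ p := by
  have hC : IsCompact ((1 - t) • A + t • B) := (hA.smul _).add (hB.smul _)
  have := ENNReal.toReal_mono hC.measure_lt_top.ne (hμ ht0 ht1 hA hB)
  rw [ENNReal.toReal_mul, ← ENNReal.toReal_rpow, ← ENNReal.toReal_rpow] at this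
  calc ((μ A).toReal ^ p) ^ (1 - t) * ((μ B).toReal ^ p) ^ t
      = ((μ A).toReal ^ (1 - t) * (μ B).toReal ^ t) ^ p := by
        rw [Real.mul_rpow (by positivity) (by positivity), ← Real.rpow_mul ENNReal.toReal_nonneg,
          ← Real.rpow_mul ENNReal.toReal_nonneg, ← Real.rpow_mul ENNReal.toReal_nonneg,
          ← Real.rpow_mul ENNReal.toReal_nonneg, mul_comm (1 - t), mul_comm t]
    _ ≤ _ := Real.rpow_le_rpow (by positivity) this hp

variable [T2Space E] [OpensMeasurableSpace E] [ContinuousAdd E] [ContinuousConstSMul ℝ E]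
  {μ : Measure E}

theorem of_measurePreserving (hμ : IsBrunnMinkowski μ) {F : Type*} [AddCommGroup F]
    [Module ℝ F] [TopologicalSpace F] [MeasurableSpace F] {ν : Measure F} (e : F →ₗ[ℝ] E)
    (he : Continuous e) (he' : Function.Injective e) (hmp : MeasurePreserving e ν μ) :
    IsBrunnMinkowski ν := by
  have measure_image {S : Set F} (hS : IsCompact (e '' S)) : μ (e '' S) = ν S := by
    rw [← hmp.measure_preimage hS.measurableSet.nullMeasurableSet, he'.preimage_image]
  intro t ht0 ht1 A B hA hB
  have hA' := hA.image he
  have hB' := hB.image he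
  have hC' : IsCompact (e '' ((1 - t) • A + t • B)) := by
    rw [image_add, image_smul_set, image_smul_set]
    exact (hA'.smul _).add (hB'.smul _)
  have := hμ ht0 ht1 hA' hB'
  rwa [← image_smul_set, ← image_smul_set, ← image_add, measure_image hA', measure_image hB',
    measure_image hC'] at this

theorem prod [SFinite μ] [IsFiniteMeasureOnCompacts μ] (hμ : IsBrunnMinkowski μ) :
    IsBrunnMinkowski ((volume : Measure ℝ).prod μ) := by
  intro t ht0 ht1 A B hA hB
  set C := (1 - t) • A + t • B
  have hC : IsCompact C := (hA.smul _).add (hB.smul _)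
  let slice (S : Set (ℝ × E)) (x : ℝ) : ℝ := (μ (Prod.mk x ⁻¹' S)).toReal
  have measurable_slice {S} (hS : IsCompact S) : Measurable (slice S) :=
    (measurable_measure_prodMk_left hS.measurableSet).ennreal_toReal
  have bddAbove_slice {S} (hS : IsCompact S) : BddAbove (range (slice S)) := by
    refine ⟨(μ (Prod.snd '' S)).toReal, ?_⟩
    rintro _ ⟨x, rfl⟩
    exact ENNReal.toReal_mono (hS.image continuous_snd).measure_lt_top.ne
      (measure_mono fun u hu => ⟨_, hu, rfl⟩)
  have lintegral_slice {S} (hS : IsCompact S) :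
      ∫⁻ x, ENNReal.ofReal (slice S x) = (volume.prod μ) S := by
    simp_rw [slice, ENNReal.ofReal_toReal (hS.preimage_prodMk _).measure_lt_top.ne]
    exact (Measure.prod_apply hS.measurableSet).symm
  have slice_le (x y : ℝ) :
      slice A x ^ (1 - t) * slice B y ^ t ≤ slice C ((1 - t) * x + t * y) := by
    simp only [slice, ENNReal.toReal_rpow, ← ENNReal.toReal_mul]
    exact ENNReal.toReal_mono (hC.preimage_prodMk _).measure_lt_top.ne
      ((hμ ht0 ht1 (hA.preimage_prodMk x) (hB.preimage_prodMk y)).trans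
        (measure_mono (smul_preimage_prodMk_add_smul_preimage_prodMk_subset _ _ _ _ _ _)))
  have := Real.prekopa_leindler ht0 ht1 (measurable_slice hA) (measurable_slice hB)
    (measurable_slice hC) (fun _ => ENNReal.toReal_nonneg) (fun _ => ENNReal.toReal_nonneg)
    (bddAbove_slice hA) (bddAbove_slice hB) slice_le
  rwa [lintegral_slice hA, lintegral_slice hB, lintegral_slice hC] at this

end IsBrunnMinkowski

theorem isBrunnMinkowski_volume_pi : ∀ n, IsBrunnMinkowski (volume : Measure (Fin n → ℝ))
  | 0 => .of_subsingleton _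
  | n + 1 => by
    let e : (Fin (n + 1) → ℝ) →ₗ[ℝ] ℝ × (Fin n → ℝ) :=
      { toFun := MeasurableEquiv.piFinSuccAbove (fun _ => ℝ) 0
        map_add' := fun _ _ => rfl
        map_smul' := fun _ _ => rfl }
    exact (isBrunnMinkowski_volume_pi n).prod.of_measurePreserving e
      (LinearMap.continuous_of_finiteDimensional e) (MeasurableEquiv.injective _)
      (volume_preserving_piFinSuccAbove _ 0)

theorem isBrunnMinkowski_volume_euclideanSpace (d : ℕ) :
    IsBrunnMinkowski (volume : Measure (EuclideanSpace ℝ (Fin d))) :=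
  (isBrunnMinkowski_volume_pi d).of_measurePreserving (WithLp.linearEquiv 2 ℝ _).toLinearMap
    (LinearMap.continuous_of_finiteDimensional _) (LinearEquiv.injective _)
    (EuclideanSpace.volume_preserving_symm_measurableEquiv_toLp (Fin d))

section AddHaar

variable {E : Type*} [NormedAddCommGroup E] [NormedSpace ℝ E] [MeasurableSpace E] [BorelSpace E]
  [FiniteDimensional ℝ E] {μ : Measure E} [μ.IsAddHaarMeasure]

theorem toReal_addHaar_smul_rpow (hE : 0 < finrank ℝ E) {c : ℝ} (hc : 0 ≤ c) (S : Set E) :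
    (μ (c • S)).toReal ^ (1 / (finrank ℝ E : ℝ)) =
      c * (μ S).toReal ^ (1 / (finrank ℝ E : ℝ)) := by
  rw [Measure.addHaar_smul_of_nonneg _ hc, ENNReal.toReal_mul,
    ENNReal.toReal_ofReal (by positivity), Real.mul_rpow (by positivity) ENNReal.toReal_nonneg,
    ← Real.rpow_natCast, ← Real.rpow_mul hc, mul_one_div_cancel (by positivity), Real.rpow_one]

theorem IsBrunnMinkowski.rpow_add_rpow_le (hμ : IsBrunnMinkowski μ) (hE : 0 < finrank ℝ E)
    {A B : Set E} (hA : A.Nonempty) (hAc : IsCompact A) (hB : B.Nonempty) (hBc : IsCompact B) :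
    (μ A).toReal ^ (1 / (finrank ℝ E : ℝ)) + (μ B).toReal ^ (1 / (finrank ℝ E : ℝ)) ≤
      (μ (A + B)).toReal ^ (1 / (finrank ℝ E : ℝ)) := by
  set r : Set E → ℝ := fun S => (μ S).toReal ^ (1 / (finrank ℝ E : ℝ))
  show r A + r B ≤ r (A + B)
  have r_le {S : Set E} (hS : μ S ≤ μ (A + B)) : r S ≤ r (A + B) :=
    Real.rpow_le_rpow ENNReal.toReal_nonneg
      (ENNReal.toReal_mono (hAc.add hBc).measure_lt_top.ne hS) (by positivity)
  obtain hα | hα := (show 0 ≤ r A by positivity).eq_or_lt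
  · rw [← hα, zero_add]
    exact r_le (measure_le_measure_add_of_nonempty_left hA B)
  obtain hβ | hβ := (show 0 ≤ r B by positivity).eq_or_lt
  · rw [← hβ, add_zero]
    exact r_le (measure_le_measure_add_of_nonempty_right A hB)
  set α := r A
  set β := r B
  have hαβ : 0 < α + β := by positivity
  have r_smul {c : ℝ} (hc : 0 ≤ c) (S : Set E) : r (c • S) = c * r S :=
    toReal_addHaar_smul_rpow hE hc S
  have hsets :
      (1 - β / (α + β)) • α⁻¹ • A + (β / (α + β)) • β⁻¹ • B = (α + β)⁻¹ • (A + B) := by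
    rw [show 1 - β / (α + β) = α / (α + β) by field_simp; ring, smul_smul, smul_smul, smul_add]
    congr 2 <;> field_simp
  have key : r (α⁻¹ • A) ^ (1 - β / (α + β)) * r (β⁻¹ • B) ^ (β / (α + β)) ≤
      r ((1 - β / (α + β)) • α⁻¹ • A + (β / (α + β)) • β⁻¹ • B) :=
    hμ.rpow_mul_rpow_le (by positivity) (by positivity) ((div_lt_one hαβ).2 (by linarith))
      (hAc.smul α⁻¹) (hBc.smul β⁻¹)
  rw [hsets, r_smul (inv_nonneg.2 hα.le), r_smul (inv_nonneg.2 hβ.le),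
    r_smul (inv_nonneg.2 hαβ.le), inv_mul_cancel₀ hα.ne', inv_mul_cancel₀ hβ.ne', Real.one_rpow,
    Real.one_rpow, one_mul] at key
  exact (one_le_inv_mul₀ hαβ).1 key

theorem IsBrunnMinkowski.concaveOn (hμ : IsBrunnMinkowski μ) (hE : 0 < finrank ℝ E)
    {A B : Set E} (hA : A.Nonempty) (hAc : IsCompact A) (hAconv : Convex ℝ A)
    (hB : B.Nonempty) (hBc : IsCompact B) (hBconv : Convex ℝ B) :
    ConcaveOn ℝ (Icc (0 : ℝ) 1)
      fun t => (μ ((1 - t) • A + t • B)).toReal ^ (1 / (finrank ℝ E : ℝ)) := by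
  refine ⟨convex_Icc 0 1, fun x hx y hy p q hp hq hpq => ?_⟩
  set K : ℝ → Set E := fun s => (1 - s) • A + s • B
  have hK (s : ℝ) : (K s).Nonempty ∧ IsCompact (K s) :=
    ⟨hA.smul_set.add hB.smul_set, (hAc.smul _).add (hBc.smul _)⟩
  have hKpq : K (p * x + q * y) = p • K x + q • K y := by
    simp only [K, smul_add, smul_smul]
    rw [add_add_add_comm, ← hAconv.add_smul (mul_nonneg hp (sub_nonneg.2 hx.2))
      (mul_nonneg hq (sub_nonneg.2 hy.2)), ← hBconv.add_smul (mul_nonneg hp hx.1)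
      (mul_nonneg hq hy.1)]
    congr 2
    linear_combination -hpq
  change p * _ + q * _ ≤ (μ (K (p * x + q * y))).toReal ^ _
  rw [hKpq, ← toReal_addHaar_smul_rpow hE hp, ← toReal_addHaar_smul_rpow hE hq]
  exact hμ.rpow_add_rpow_le hE (hK x).1.smul_set ((hK x).2.smul p) (hK y).1.smul_set
    ((hK y).2.smul q)

end AddHaar

theorem stmt7 (d : ℕ) (hd : 0 < d) (A B : Set (EuclideanSpace ℝ (Fin d)))
    (hA : A.Nonempty) (hAc : IsCompact A) (hAconv : Convex ℝ A)
    (hB : B.Nonempty) (hBc : IsCompact B) (hBconv : Convex ℝ B) :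
    ConcaveOn ℝ (Set.Icc (0 : ℝ) 1)
      (fun t => (volume ((1 - t) • A + t • B)).toReal ^ ((1 : ℝ) / d)) ∧
    (volume A).toReal ^ ((1 : ℝ) / d) + (volume B).toReal ^ ((1 : ℝ) / d) ≤
      (volume (A + B)).toReal ^ ((1 : ℝ) / d) := by
  have hμ := isBrunnMinkowski_volume_euclideanSpace d
  have hE : 0 < finrank ℝ (EuclideanSpace ℝ (Fin d)) := by rwa [finrank_euclideanSpace_fin]
  have concave := hμ.concaveOn hE hA hAc hAconv hB hBc hBconv
  have add := hμ.rpow_add_rpow_le hE hA hAc hB hBc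
  rw [finrank_euclideanSpace_fin] at concave add
  exact ⟨concave, add⟩
end

section
/- Let h : 2^E → ℤ_{≥0} be a polymatroid rank function on a finite set E. Then the set J_h = {α ∈ ℤ^E_{≥0} : Σ_{i∈E} α_i = h(E) and Σ_{i∈A} α_i ≤ h(A) for all A ⊆ E} is nonempty. -/
/-!
Greedy algorithm: list `E` as `x₁, …, xₙ` and put `α xₖ = h {x₁, …, xₖ} - h {x₁, …, xₖ₋₁}`.
The sum telescopes to `h E`. If `xₖ` is the last element of `A` in this order, submodularity for
`A` and `{x₁, …, xₖ₋₁}` bounds `α xₖ` by `h A - h (A \ {xₖ})`, so `∑ i ∈ A, α i ≤ h A` follows by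
induction.
-/

section

variable {E : Type*} [DecidableEq E]

/-- `α ∈ J_h` for the restriction of `h` to `S`, i.e. `α` is a base of that polymatroid. -/
def IsBaseOn (h : Finset E → ℕ) (S : Finset E) (α : E → ℕ) : Prop :=
  ∑ i ∈ S, α i = h S ∧ ∀ A ⊆ S, ∑ i ∈ A, α i ≤ h A

theorem insert_add_erase_le_of_submodular {h : Finset E → ℕ}
    (hsub : ∀ A B : Finset E, h (A ∪ B) + h (A ∩ B) ≤ h A + h B)
    {S A : Finset E} {x : E} (hx : x ∉ S) (hxA : x ∈ A) (hA : A ⊆ insert x S) :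
    h (insert x S) + h (A.erase x) ≤ h A + h S := by
  have hunion : A ∪ S = insert x S := by
    ext i
    constructor
    · intro hi
      rcases Finset.mem_union.mp hi with hi | hi
      exacts [hA hi, Finset.mem_insert_of_mem hi]
    · intro hi
      rcases Finset.mem_insert.mp hi with rfl | hi
      exacts [Finset.mem_union_left _ hxA, Finset.mem_union_right _ hi]
  have hinter : A ∩ S = A.erase x := by
    ext i
    simp only [Finset.mem_inter, Finset.mem_erase]
    constructor
    · rintro ⟨hiA, hiS⟩
      exact ⟨fun hix => hx (hix ▸ hiS), hiA⟩
    · rintro ⟨hix, hiA⟩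
      exact ⟨hiA, (Finset.mem_insert.mp (hA hiA)).resolve_left hix⟩
  simpa only [hunion, hinter] using hsub A S

theorem IsBaseOn.update_insert {h : Finset E → ℕ}
    (hmono : ∀ A B : Finset E, A ⊆ B → h A ≤ h B)
    (hsub : ∀ A B : Finset E, h (A ∪ B) + h (A ∩ B) ≤ h A + h B)
    {S : Finset E} {α : E → ℕ} {x : E} (hα : IsBaseOn h S α) (hx : x ∉ S) :
    IsBaseOn h (insert x S) (Function.update α x (h (insert x S) - h S)) := by
  have hgrow : h S ≤ h (insert x S) := hmono _ _ (Finset.subset_insert x S)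
  constructor
  · rw [Finset.sum_insert hx, Function.update_self, Finset.sum_update_of_notMem hx, hα.1]
    omega
  · intro A hA
    by_cases hxA : x ∈ A
    · have herase : A.erase x ⊆ S := by
        intro i hi
        exact (Finset.mem_insert.mp (hA (Finset.mem_of_mem_erase hi))).resolve_left
          (Finset.ne_of_mem_erase hi)
      have hrest := hα.2 _ herase
      have hgain := insert_add_erase_le_of_submodular hsub hx hxA hA
      rw [Finset.sum_update_of_mem hxA, Finset.sdiff_singleton_eq_erase]
      omega
    · rw [Finset.sum_update_of_notMem hxA]
      exact hα.2 A ((Finset.subset_insert_iff_of_notMem hxA).mp hA)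

theorem exists_isBaseOn {h : Finset E → ℕ} (h0 : h ∅ = 0)
    (hmono : ∀ A B : Finset E, A ⊆ B → h A ≤ h B)
    (hsub : ∀ A B : Finset E, h (A ∪ B) + h (A ∩ B) ≤ h A + h B) (S : Finset E) :
    ∃ α, IsBaseOn h S α := by
  induction S using Finset.induction_on with
  | empty => exact ⟨0, by simp [h0], fun A hA => by simp [Finset.subset_empty.mp hA, h0]⟩
  | insert x S hx ih =>
    obtain ⟨α, hα⟩ := ih
    exact ⟨_, hα.update_insert hmono hsub hx⟩

end

theorem stmt9 {E : Type*} [Fintype E] [DecidableEq E] (h : Finset E → ℕ)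
    (h0 : h ∅ = 0)
    (hmono : ∀ A B : Finset E, A ⊆ B → h A ≤ h B)
    (hsub : ∀ A B : Finset E, h (A ∪ B) + h (A ∩ B) ≤ h A + h B) :
    ∃ α : E → ℕ, (∑ i, α i) = h Finset.univ ∧
      ∀ A : Finset E, (∑ i ∈ A, α i) ≤ h A := by
  obtain ⟨α, hsum, hle⟩ := exists_isBaseOn h0 hmono hsub Finset.univ
  exact ⟨α, hsum, fun A => hle A (Finset.subset_univ A)⟩
end

section
/- Let J be a nonempty M-convex subset of ℤ^E_{≥0} (i.e., J satisfies the symmetric basis exchange property). Then the function h_J(A) = max{ Σ_{i∈A} β_i : β ≤ α componentwise for some α ∈ J } defines a polymatroid rank function on E: h_J(∅) = 0, h_J is monotone, and h_J is submodular. -/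
/-!
All vectors of an M-convex set `J` have the same total size: if `α` has a coordinate larger than
`β`, an exchange moves `α` one step closer to `β` without changing its size. Hence `J` is finite
and `h_J(A)` is the largest value of `∑_{i ∈ A} α i` over `α ∈ J`, which gives normalization and
monotonicity. For submodularity, among the maximizers of the sum over `A ∪ B` there is one that
also maximizes the sum over `A ∩ B`: if a maximizer `α` loses on `A ∩ B` to some `γ`, the exchange
between `γ` and `α` at a coordinate `i ∈ A ∩ B` with `α i < γ i` yields a maximizer closer to `γ`.
Evaluating `h_J` at that common maximizer, `h(A ∪ B) + h(A ∩ B) = ∑_A α + ∑_B α ≤ h(A) + h(B)`.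
-/

/-- A set of nonnegative integer vectors satisfies the symmetric basis exchange
property (is M-convex). -/
def MConvex {E : Type*} [DecidableEq E] (J : Set (E → ℕ)) : Prop :=
  ∀ α ∈ J, ∀ β ∈ J, ∀ i : E, β i < α i →
    ∃ j : E, α j < β j ∧
      (fun k => α k + (if k = j then 1 else 0) - (if k = i then 1 else 0)) ∈ J ∧
      (fun k => β k + (if k = i then 1 else 0) - (if k = j then 1 else 0)) ∈ J

open Finset

theorem sSup_sums_below_eq_of_isMaxOn {E : Type*} {J : Set (E → ℕ)} {A : Finset E} {α : E → ℕ}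
    (hα : α ∈ J) (hmax : IsMaxOn (fun β => ∑ i ∈ A, β i) J α) :
    sSup {s | ∃ α ∈ J, ∃ β : E → ℕ, (∀ i, β i ≤ α i) ∧ s = ∑ i ∈ A, β i} = ∑ i ∈ A, α i := by
  refine IsGreatest.csSup_eq ⟨⟨α, hα, α, fun _ => le_rfl, rfl⟩, ?_⟩
  rintro _ ⟨α', hα', β, hβ, rfl⟩
  exact (sum_le_sum fun i _ => hβ i).trans (isMaxOn_iff.mp hmax α' hα')

section

variable {E : Type*} [DecidableEq E]

/-- Moves one unit from coordinate `i` to coordinate `j`, as in `MConvex`; by truncated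
subtraction this is a genuine move only when `1 ≤ α i`. -/
def transfer (α : E → ℕ) (i j : E) : E → ℕ :=
  fun k => α k + (if k = j then 1 else 0) - (if k = i then 1 else 0)

lemma sum_transfer_add (A : Finset E) {α : E → ℕ} {i : E} (j : E) (hi : 1 ≤ α i) :
    ∑ k ∈ A, transfer α i j k + (if i ∈ A then 1 else 0) =
      ∑ k ∈ A, α k + (if j ∈ A then 1 else 0) := by
  have hk : ∀ k, transfer α i j k + (if k = i then 1 else 0) =
      α k + (if k = j then 1 else 0) := by
    intro k
    unfold transfer
    split_ifs <;> simp_all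
  simpa only [sum_add_distrib, sum_ite_eq'] using sum_congr rfl fun k _ => hk k

variable [Fintype E]

def l1Dist (α β : E → ℕ) : ℕ :=
  ∑ k, Nat.dist (α k) (β k)

lemma l1Dist_transfer_add_two {α β : E → ℕ} {i j : E} (hi : β i < α i) (hj : α j < β j) :
    l1Dist (transfer α i j) β + 2 = l1Dist α β := by
  have hk : ∀ k, Nat.dist (transfer α i j k) (β k) + (if k = i then 1 else 0) +
      (if k = j then 1 else 0) = Nat.dist (α k) (β k) := by
    intro k
    unfold transfer Nat.dist
    split_ifs <;> simp_all <;> omega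
  have := sum_congr rfl fun k (_ : k ∈ univ) => hk k
  simp only [sum_add_distrib, sum_ite_eq', mem_univ, if_true] at this
  unfold l1Dist
  omega

namespace MConvex

variable {J : Set (E → ℕ)}

theorem sum_le_sum (hJ : MConvex J) {α β : E → ℕ} (hα : α ∈ J) (hβ : β ∈ J) :
    ∑ k, α k ≤ ∑ k, β k := by
  induction hd : l1Dist α β using Nat.strong_induction_on generalizing α with
  | _ d ih =>
    by_contra! hlt
    obtain ⟨i, -, hi⟩ : ∃ i ∈ univ, β i < α i := exists_lt_of_sum_lt hlt
    obtain ⟨j, hj, hmem, -⟩ := hJ α hα β hβ i hi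
    have hsum := sum_transfer_add univ j (Nat.one_le_of_lt hi)
    have hdist := l1Dist_transfer_add_two hi hj
    simp only [mem_univ, if_true] at hsum
    have := ih _ (by omega) (show transfer α i j ∈ J from hmem) rfl
    omega

theorem sum_eq (hJ : MConvex J) {α β : E → ℕ} (hα : α ∈ J) (hβ : β ∈ J) :
    ∑ k, α k = ∑ k, β k :=
  (hJ.sum_le_sum hα hβ).antisymm (hJ.sum_le_sum hβ hα)

theorem finite (hJ : MConvex J) : J.Finite := by
  obtain rfl | ⟨α₀, hα₀⟩ := J.eq_empty_or_nonempty
  · exact Set.finite_empty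
  refine (Set.Finite.pi' fun _ => Set.finite_Iic (∑ k, α₀ k)).subset fun α hα k => ?_
  rw [Set.mem_Iic, ← hJ.sum_eq hα hα₀]
  exact single_le_sum (fun _ _ => Nat.zero_le _) (mem_univ k)

theorem exists_isMaxOn_sum (hJ : MConvex J) (hne : J.Nonempty) (A : Finset E) :
    ∃ α ∈ J, IsMaxOn (fun β => ∑ i ∈ A, β i) J α := by
  simpa only [isMaxOn_iff] using Set.exists_max_image J (fun β => ∑ i ∈ A, β i) hJ.finite hne

theorem exists_isMaxOn_sum_ge (hJ : MConvex J) {C D : Finset E} (hCD : C ⊆ D) {γ : E → ℕ}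
    (hγ : γ ∈ J) {α : E → ℕ} (hα : α ∈ J) (hmax : IsMaxOn (fun β => ∑ i ∈ D, β i) J α) :
    ∃ α' ∈ J, IsMaxOn (fun β => ∑ i ∈ D, β i) J α' ∧ ∑ i ∈ C, γ i ≤ ∑ i ∈ C, α' i := by
  induction hd : l1Dist α γ using Nat.strong_induction_on generalizing α with
  | _ d ih =>
    by_cases hle : ∑ i ∈ C, γ i ≤ ∑ i ∈ C, α i
    · exact ⟨α, hα, hmax, hle⟩
    obtain ⟨i, hiC, hi⟩ := exists_lt_of_sum_lt (not_le.mp hle)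
    obtain ⟨j, hj, -, hmem⟩ := hJ γ hγ α hα i hi
    replace hmem : transfer α j i ∈ J := hmem
    have hiD : i ∈ D := hCD hiC
    have hsum := sum_transfer_add D i (Nat.one_le_of_lt hj)
    have hle' := isMaxOn_iff.mp hmax _ hmem
    -- moving a unit into `i ∈ D` cannot increase the maximal sum over `D`, so it came from `D`
    have hjD : j ∈ D := by
      by_contra hjD
      simp only [hiD, hjD, if_true, if_false] at hsum
      omega
    simp only [hiD, hjD, if_true] at hsum
    have hmax' : IsMaxOn (fun β => ∑ i ∈ D, β i) J (transfer α j i) :=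
      isMaxOn_iff.mpr fun β hβ => (isMaxOn_iff.mp hmax β hβ).trans (by omega)
    have hdist := l1Dist_transfer_add_two hj hi
    exact ih _ (by omega) hmem hmax' rfl

theorem exists_isMaxOn_sum_of_subset (hJ : MConvex J) (hne : J.Nonempty) {C D : Finset E}
    (hCD : C ⊆ D) :
    ∃ α ∈ J, IsMaxOn (fun β => ∑ i ∈ D, β i) J α ∧ IsMaxOn (fun β => ∑ i ∈ C, β i) J α := by
  obtain ⟨γ, hγ, hγmax⟩ := hJ.exists_isMaxOn_sum hne C
  obtain ⟨α, hα, hαmax⟩ := hJ.exists_isMaxOn_sum hne D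
  obtain ⟨α', hα', hα'max, hγα'⟩ := hJ.exists_isMaxOn_sum_ge hCD hγ hα hαmax
  exact ⟨α', hα', hα'max, isMaxOn_iff.mpr fun β hβ => (isMaxOn_iff.mp hγmax β hβ).trans hγα'⟩

end MConvex

end

theorem stmt10 {E : Type*} [Fintype E] [DecidableEq E] (J : Set (E → ℕ))
    (hJ : MConvex J) (hne : J.Nonempty) :
    let hJfun : Finset E → ℕ := fun A =>
      sSup {s | ∃ α ∈ J, ∃ β : E → ℕ, (∀ i, β i ≤ α i) ∧ s = ∑ i ∈ A, β i}
    hJfun ∅ = 0 ∧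
    (∀ A B : Finset E, A ⊆ B → hJfun A ≤ hJfun B) ∧
    (∀ A B : Finset E, hJfun (A ∪ B) + hJfun (A ∩ B) ≤ hJfun A + hJfun B) := by
  intro h
  have h_eq : ∀ {A : Finset E} {α : E → ℕ}, α ∈ J →
      IsMaxOn (fun β => ∑ i ∈ A, β i) J α → h A = ∑ i ∈ A, α i :=
    fun hα hmax => sSup_sums_below_eq_of_isMaxOn hα hmax
  have sum_le_h : ∀ (A : Finset E) {α : E → ℕ}, α ∈ J → ∑ i ∈ A, α i ≤ h A := by
    intro A α hα
    obtain ⟨γ, hγ, hγmax⟩ := hJ.exists_isMaxOn_sum hne A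
    rw [h_eq hγ hγmax]
    exact isMaxOn_iff.mp hγmax α hα
  refine ⟨?_, fun A B hAB => ?_, fun A B => ?_⟩
  · obtain ⟨α, hα, hmax⟩ := hJ.exists_isMaxOn_sum hne ∅
    rw [h_eq hα hmax, sum_empty]
  · obtain ⟨α, hα, hmax⟩ := hJ.exists_isMaxOn_sum hne A
    rw [h_eq hα hmax]
    exact (sum_le_sum_of_subset hAB).trans (sum_le_h B hα)
  · obtain ⟨α, hα, hU, hI⟩ :=
      hJ.exists_isMaxOn_sum_of_subset hne (inter_subset_union (s := A) (t := B))
    rw [h_eq hα hU, h_eq hα hI, sum_union_inter]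
    exact add_le_add (sum_le_h A hα) (sum_le_h B hα)
end

section
/- For a function φ : E → W from a finite set E to a finite-dimensional vector space W over a field k, the set of indicator vectors {e_B : B ⊆ E and φ(B) is a basis of W} satisfies the symmetric basis exchange property. -/
open Module Submodule

/-- Replacement: if `b` is a basis indexed by `B` agreeing with `φ`, `i ∈ B`,
`v ∉ B`, and the `i`-th coordinate of `φ v` is nonzero, then
`insert v (B.erase i)` also gives a basis. -/
lemma key_replace {k W E : Type*} [Field k] [AddCommGroup W] [Module k W]
    [FiniteDimensional k W] [DecidableEq E] (φ : E → W) (B : Finset E)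
    (b : Basis (B : Set E) k W) (hb : ∀ x : (B : Set E), b x = φ x)
    (i v : E) (hi : i ∈ B) (hv : v ∉ B)
    (h : b.repr (φ v) ⟨i, hi⟩ ≠ 0) :
    LinearIndependent k (fun x : ((insert v (B.erase i) : Finset E) : Set E) => φ x) ∧
      Submodule.span k (φ '' ((insert v (B.erase i) : Finset E) : Set E)) = ⊤ := by
  classical
  set B' : Finset E := insert v (B.erase i) with hB'
  have hcoe : ∀ C : Finset E, Fintype.card ((C : Set E) : Type _) = C.card := fun C =>
    (Fintype.card_congr (Equiv.subtypeEquivRight fun _ => Finset.mem_coe)).trans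
      (Fintype.card_coe C)
  have hcardB : B.card = finrank k W := by
    rw [finrank_eq_card_basis b, ← hcoe B]
  have hcard : B'.card = finrank k W := by
    rw [hB', Finset.card_insert_of_notMem (by simp [hv]),
      Finset.card_erase_of_mem hi,
      Nat.sub_add_cancel (Finset.card_pos.mpr ⟨i, hi⟩), hcardB]
  -- φ i is in the span of φ '' B'
  have hmem : ∀ x : E, x ∈ B' → φ x ∈ span k (φ '' (B' : Set E)) := fun x hx =>
    subset_span ⟨x, hx, rfl⟩
  have hsum : φ v = ∑ x : (B : Set E), b.repr (φ v) x • φ x := by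
    conv_lhs => rw [← b.sum_repr (φ v)]
    exact Finset.sum_congr rfl fun x _ => by rw [hb]
  have hiI : φ i ∈ span k (φ '' (B' : Set E)) := by
    have hsplit : φ v = b.repr (φ v) ⟨i, hi⟩ • φ i +
        ∑ x ∈ Finset.univ.erase ⟨i, hi⟩, b.repr (φ v) x • φ x :=
      hsum.trans (Finset.add_sum_erase _ (fun x => b.repr (φ v) x • φ x)
        (Finset.mem_univ ⟨i, hi⟩)).symm
    have hrest : ∑ x ∈ Finset.univ.erase (⟨i, hi⟩ : (B : Set E)),
        b.repr (φ v) x • φ x ∈ span k (φ '' (B' : Set E)) := by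
      refine Submodule.sum_mem _ fun x hx => Submodule.smul_mem _ _ (hmem x ?_)
      have hxne : x ≠ ⟨i, hi⟩ := (Finset.mem_erase.mp hx).1
      have : (x : E) ≠ i := fun hxi => hxne (Subtype.ext hxi)
      simp [hB', Finset.mem_insert, Finset.mem_erase, this, x.2]
    have hvI : φ v ∈ span k (φ '' (B' : Set E)) := hmem v (by simp [hB'])
    have heq : b.repr (φ v) ⟨i, hi⟩ • φ i = φ v -
        ∑ x ∈ Finset.univ.erase (⟨i, hi⟩ : (B : Set E)), b.repr (φ v) x • φ x :=
      eq_sub_of_add_eq hsplit.symm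
    have : b.repr (φ v) ⟨i, hi⟩ • φ i ∈ span k (φ '' (B' : Set E)) := by
      rw [heq]; exact Submodule.sub_mem _ hvI hrest
    have := Submodule.smul_mem _ (b.repr (φ v) ⟨i, hi⟩)⁻¹ this
    rwa [inv_smul_smul₀ h] at this
  have hspan : Submodule.span k (φ '' (B' : Set E)) = ⊤ := by
    rw [eq_top_iff]
    have hBspan : span k (φ '' (B : Set E)) = ⊤ := by
      have := b.span_eq
      rw [show Set.range b = φ '' (B : Set E) from ?_] at this
      · exact this
      · rw [Set.image_eq_range]; exact congrArg _ (funext hb)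
    rw [← hBspan, span_le]
    rintro w ⟨x, hx, rfl⟩
    by_cases hxi : x = i
    · subst hxi; exact hiI
    · exact hmem x (by
        simp only [hB', Finset.mem_insert, Finset.mem_erase]
        exact Or.inr ⟨hxi, hx⟩)
  refine ⟨?_, hspan⟩
  refine linearIndependent_of_top_le_span_of_card_eq_finrank ?_ ?_
  · rw [← Set.image_eq_range, hspan]
  · rw [hcoe]; exact hcard

theorem stmt12 {k W E : Type*} [Field k] [AddCommGroup W] [Module k W]
    [FiniteDimensional k W] [Fintype E] [DecidableEq E] (φ : E → W) :
    MConvex {f : E → ℕ | ∃ B : Finset E,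
      LinearIndependent k (fun b : (B : Set E) => φ b) ∧
      Submodule.span k (φ '' (B : Set E)) = ⊤ ∧
      f = fun i => if i ∈ B then 1 else 0} := by
  classical
  rintro α ⟨B, hBli, hBsp, rfl⟩ β ⟨C, hCli, hCsp, rfl⟩ i hlt
  have hiB : i ∈ B := by by_contra h; simp [h] at hlt
  have hiC : i ∉ C := by intro h; simp [h, hiB] at hlt
  have hBsp' : ⊤ ≤ Submodule.span k (Set.range fun b : (B : Set E) => φ b) := by
    rw [← Set.image_eq_range, hBsp]
  have hCsp' : ⊤ ≤ Submodule.span k (Set.range fun b : (C : Set E) => φ b) := by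
    rw [← Set.image_eq_range, hCsp]
  set bB : Basis (B : Set E) k W := Basis.mk hBli hBsp' with hbBdef
  set bC : Basis (C : Set E) k W := Basis.mk hCli hCsp' with hbCdef
  have hbB : ∀ x : (B : Set E), bB x = φ x := fun x => Basis.mk_apply _ _ _
  have hbC : ∀ x : (C : Set E), bC x = φ x := fun x => Basis.mk_apply _ _ _
  -- find the exchange element j
  have hone : bB.repr (φ i) ⟨i, hiB⟩ = 1 := by
    rw [← hbB ⟨i, hiB⟩]; simp
  have hsumC : φ i = ∑ c : (C : Set E), bC.repr (φ i) c • φ c := by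
    conv_lhs => rw [← bC.sum_repr (φ i)]
    exact Finset.sum_congr rfl fun x _ => by rw [hbC]
  have hsum1 : ∑ c : (C : Set E),
      bC.repr (φ i) c * bB.repr (φ c) ⟨i, hiB⟩ = 1 := by
    rw [← hone]
    conv_rhs => rw [hsumC]
    rw [map_sum, Finsupp.coe_finset_sum, Finset.sum_apply]
    exact Finset.sum_congr rfl fun x _ => by
      rw [map_smul]; rfl
  obtain ⟨c, -, hc⟩ := Finset.exists_ne_zero_of_sum_ne_zero
    (hsum1 ▸ (one_ne_zero : (1 : k) ≠ 0))
  have ha : bC.repr (φ i) c ≠ 0 := left_ne_zero_of_mul hc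
  have hLc : bB.repr (φ c) ⟨i, hiB⟩ ≠ 0 := right_ne_zero_of_mul hc
  have hjC : (c : E) ∈ C := c.2
  have hji : (c : E) ≠ i := fun h => hiC (h ▸ hjC)
  have hjB : (c : E) ∉ B := by
    intro hjB
    apply hLc
    rw [← hbB ⟨c, hjB⟩, bB.repr_self, Finsupp.single_apply]
    simp [Subtype.ext_iff, hji]
  obtain ⟨li1, sp1⟩ := key_replace φ B bB hbB i c hiB hjB hLc
  have hac : bC.repr (φ i) ⟨(c : E), hjC⟩ ≠ 0 := by simpa using ha
  obtain ⟨li2, sp2⟩ := key_replace φ C bC hbC c i hjC hiC hac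
  refine ⟨c, by simp [hjB, hjC], ⟨insert (c : E) (B.erase i), li1, sp1, ?_⟩,
    ⟨insert i (C.erase (c : E)), li2, sp2, ?_⟩⟩
  · funext x
    by_cases hxj : x = (c : E)
    · subst hxj; simp [hjB, hji]
    · by_cases hxi : x = i
      · subst hxi; simp [hiB, Ne.symm hji, fun h => hxj (h : x = c)]
      · simp [hxj, hxi, Finset.mem_insert, Finset.mem_erase]
  · funext x
    by_cases hxi : x = i
    · subst hxi; simp [hiC, Ne.symm hji]
    · by_cases hxj : x = (c : E)
      · subst hxj; simp [hjC, hxi]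
      · simp [hxj, hxi, Finset.mem_insert, Finset.mem_erase]
end

section
/- The bivariate polynomial f = Σ_{a=0}^d p_a · x₁^a x₂^{d−a}/(a!(d−a)!) with nonnegative coefficients p_a has the property that all sequences of directional second derivatives satisfy the Lorentzian condition (∂_u∂_u g)(∂_v∂_v g) ≤ (∂_u∂_v g)² for g any (d−2)-fold directional derivative of f and u, v in the nonnegative orthant, whenever p₀,…,p_d has no internal zeros and p_{a−1}p_{a+1} ≤ p_a² for all 0 < a < d. -/
open MvPolynomial

/-!
A directional derivative `∂_v` maps the normalized form `∑ q_a x^a y^(m+1-a) / (a! (m+1-a)!)` to the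
normalized form of degree `m` with coefficients `v₀ q_(a+1) + v₁ q_a`. For `v ≥ 0` this preserves
nonnegativity, the absence of internal zeros and log-concavity; the cross terms are controlled by
`q_a q_(a+3) ≤ q_(a+1) q_(a+2)`, the product of two log-concavity inequalities. After `d - 2`
derivatives we are left with a binary quadratic form with Gram matrix `[[q₂, q₁], [q₁, q₀]]`, and
`B(u,u) B(w,w) - B(u,w)² = (q₀ q₂ - q₁²) (u₀ w₁ - u₁ w₀)² ≤ 0`. For `d < 2` every second derivative
vanishes.
-/

/-- The directional derivative `∂_u = u₁∂₁ + u₂∂₂` acting on bivariate polynomials. -/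
noncomputable def dirDeriv (u : Fin 2 → ℝ) (g : MvPolynomial (Fin 2) ℝ) :
    MvPolynomial (Fin 2) ℝ :=
  C (u 0) * pderiv 0 g + C (u 1) * pderiv 1 g

noncomputable def normalizedForm (m : ℕ) (q : ℕ → ℝ) : MvPolynomial (Fin 2) ℝ :=
  ∑ a ∈ Finset.range (m + 1),
    C (q a / ((a.factorial : ℝ) * ((m - a).factorial : ℝ))) * X 0 ^ a * X 1 ^ (m - a)

def derivCoeffs (v : Fin 2 → ℝ) (q : ℕ → ℝ) (a : ℕ) : ℝ := v 0 * q (a + 1) + v 1 * q a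

lemma succ_mul_div_factorial_mul_factorial (x : ℝ) (a b : ℕ) :
    ((a + 1 : ℕ) : ℝ) * (x / ((a + 1).factorial * b.factorial)) =
      x / (a.factorial * b.factorial) := by
  rw [Nat.factorial_succ]
  push_cast
  field_simp

lemma succ_mul_div_factorial_mul_factorial' (x : ℝ) (a b : ℕ) :
    ((b + 1 : ℕ) : ℝ) * (x / (a.factorial * (b + 1).factorial)) =
      x / (a.factorial * b.factorial) := by
  rw [mul_comm (a.factorial : ℝ), mul_comm (a.factorial : ℝ),
    succ_mul_div_factorial_mul_factorial]

lemma pderiv_zero_monomial (c : ℝ) (a b : ℕ) :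
    pderiv (0 : Fin 2) (C c * X 0 ^ (a + 1) * X 1 ^ b) =
      C (((a + 1 : ℕ) : ℝ) * c) * X 0 ^ a * X 1 ^ b := by
  simp only [mul_assoc, Derivation.leibniz, Derivation.leibniz_pow, pderiv_X_self,
    pderiv_X_of_ne one_ne_zero, pderiv_C, smul_zero, zero_add, add_zero, add_tsub_cancel_right,
    nsmul_eq_mul, C_mul, map_natCast]
  ring

lemma pderiv_one_monomial (c : ℝ) (a b : ℕ) :
    pderiv (1 : Fin 2) (C c * X 0 ^ a * X 1 ^ (b + 1)) =
      C (((b + 1 : ℕ) : ℝ) * c) * X 0 ^ a * X 1 ^ b := by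
  simp only [mul_assoc, Derivation.leibniz, Derivation.leibniz_pow, pderiv_X_self,
    pderiv_X_of_ne zero_ne_one, pderiv_C, smul_zero, add_zero, add_tsub_cancel_right,
    nsmul_eq_mul, C_mul, map_natCast]
  ring

lemma pderiv_zero_normalizedForm (m : ℕ) (q : ℕ → ℝ) :
    pderiv 0 (normalizedForm (m + 1) q) = normalizedForm m (fun a => q (a + 1)) := by
  rw [normalizedForm, normalizedForm, map_sum, Finset.sum_range_succ']
  simp only [Nat.add_sub_add_right, pderiv_zero_monomial, succ_mul_div_factorial_mul_factorial]
  simp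

lemma pderiv_one_normalizedForm (m : ℕ) (q : ℕ → ℝ) :
    pderiv 1 (normalizedForm (m + 1) q) = normalizedForm m q := by
  rw [normalizedForm, normalizedForm, map_sum, Finset.sum_range_succ, Nat.sub_self]
  have hsub : ∀ a ∈ Finset.range (m + 1), m + 1 - a = m - a + 1 := fun a ha => by
    rw [Finset.mem_range] at ha; omega
  rw [Finset.sum_congr rfl fun a ha => by rw [hsub a ha]]
  simp only [pderiv_one_monomial, succ_mul_div_factorial_mul_factorial']
  simp

lemma C_mul_normalizedForm (c : ℝ) (m : ℕ) (q : ℕ → ℝ) :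
    C c * normalizedForm m q = normalizedForm m (c • q) := by
  simp only [normalizedForm, Finset.mul_sum, Pi.smul_apply, smul_eq_mul, mul_div_assoc, C_mul,
    mul_assoc]

lemma normalizedForm_add (m : ℕ) (q r : ℕ → ℝ) :
    normalizedForm m q + normalizedForm m r = normalizedForm m (q + r) := by
  simp only [normalizedForm, ← Finset.sum_add_distrib, Pi.add_apply, add_div, C_add, add_mul]

lemma dirDeriv_normalizedForm (v : Fin 2 → ℝ) (m : ℕ) (q : ℕ → ℝ) :
    dirDeriv v (normalizedForm (m + 1) q) = normalizedForm m (derivCoeffs v q) := by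
  rw [dirDeriv, pderiv_zero_normalizedForm, pderiv_one_normalizedForm, C_mul_normalizedForm,
    C_mul_normalizedForm, normalizedForm_add]
  rfl

structure IsLogConcaveNoInternalZeros (m : ℕ) (q : ℕ → ℝ) : Prop where
  nonneg : ∀ a ≤ m, 0 ≤ q a
  noInternalZeros : ∀ i j k, i < j → j < k → k ≤ m → 0 < q i → 0 < q k → 0 < q j
  mul_le_sq : ∀ a, a + 2 ≤ m → q a * q (a + 2) ≤ q (a + 1) ^ 2

namespace IsLogConcaveNoInternalZeros

variable {m : ℕ} {q : ℕ → ℝ}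

lemma pos_of_le_of_le (h : IsLogConcaveNoInternalZeros m q) {i j k : ℕ} (hij : i ≤ j)
    (hjk : j ≤ k) (hk : k ≤ m) (hi : 0 < q i) (hk' : 0 < q k) : 0 < q j := by
  rcases hij.eq_or_lt with rfl | hij
  · exact hi
  rcases hjk.eq_or_lt with rfl | hjk
  · exact hk'
  exact h.noInternalZeros i j k hij hjk hk hi hk'

lemma mul_le_mul_inner (h : IsLogConcaveNoInternalZeros m q) {a : ℕ} (ha : a + 3 ≤ m) :
    q a * q (a + 3) ≤ q (a + 1) * q (a + 2) := by
  have hinner : 0 ≤ q (a + 1) * q (a + 2) :=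
    mul_nonneg (h.nonneg _ (by omega)) (h.nonneg _ (by omega))
  rcases le_or_gt (q a * q (a + 3)) 0 with hout | hout
  · exact hout.trans hinner
  have h0 : 0 < q a := pos_of_mul_pos_left hout (h.nonneg _ ha)
  have h3 : 0 < q (a + 3) := pos_of_mul_pos_right hout (h.nonneg _ (by omega))
  have h1 := h.noInternalZeros a (a + 1) (a + 3) (by omega) (by omega) ha h0 h3
  have h2 := h.noInternalZeros a (a + 2) (a + 3) (by omega) (by omega) ha h0 h3
  refine le_of_mul_le_mul_right ?_ (mul_pos h1 h2)
  calc q a * q (a + 3) * (q (a + 1) * q (a + 2))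
      = q a * q (a + 2) * (q (a + 1) * q (a + 3)) := by ring
    _ ≤ q (a + 1) ^ 2 * q (a + 2) ^ 2 :=
      mul_le_mul (h.mul_le_sq a (by omega)) (h.mul_le_sq (a + 1) ha)
        (mul_nonneg (h.nonneg _ (by omega)) h3.le) (sq_nonneg _)
    _ = q (a + 1) * q (a + 2) * (q (a + 1) * q (a + 2)) := by ring

lemma derivCoeffs_pos_cases (h : IsLogConcaveNoInternalZeros (m + 1) q) {v : Fin 2 → ℝ}
    (hv : ∀ i, 0 ≤ v i) {l : ℕ} (hl : l ≤ m) (hpos : 0 < derivCoeffs v q l) :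
    (0 < v 0 ∧ 0 < q (l + 1)) ∨ (0 < v 1 ∧ 0 < q l) := by
  rcases lt_or_ge 0 (v 0 * q (l + 1)) with h0 | h0
  · exact .inl ⟨pos_of_mul_pos_left h0 (h.nonneg _ (by omega)), pos_of_mul_pos_right h0 (hv 0)⟩
  · have h1 : 0 < v 1 * q l := by unfold derivCoeffs at hpos; linarith
    exact .inr ⟨pos_of_mul_pos_left h1 (h.nonneg _ (by omega)), pos_of_mul_pos_right h1 (hv 1)⟩

lemma derivCoeffs_nonneg (h : IsLogConcaveNoInternalZeros (m + 1) q) {v : Fin 2 → ℝ}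
    (hv : ∀ i, 0 ≤ v i) {l : ℕ} (hl : l ≤ m) : 0 ≤ derivCoeffs v q l :=
  add_nonneg (mul_nonneg (hv 0) (h.nonneg _ (by omega)))
    (mul_nonneg (hv 1) (h.nonneg _ (by omega)))

lemma derivCoeffs_noInternalZeros (h : IsLogConcaveNoInternalZeros (m + 1) q) {v : Fin 2 → ℝ}
    (hv : ∀ i, 0 ≤ v i) {i j k : ℕ} (hij : i < j) (hjk : j < k) (hk : k ≤ m)
    (hi : 0 < derivCoeffs v q i) (hk' : 0 < derivCoeffs v q k) : 0 < derivCoeffs v q j := by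
  have left_pos (hv0 : 0 < v 0) (hq : 0 < q (j + 1)) : 0 < derivCoeffs v q j :=
    add_pos_of_pos_of_nonneg (mul_pos hv0 hq) (mul_nonneg (hv 1) (h.nonneg _ (by omega)))
  have right_pos (hv1 : 0 < v 1) (hq : 0 < q j) : 0 < derivCoeffs v q j :=
    add_pos_of_nonneg_of_pos (mul_nonneg (hv 0) (h.nonneg _ (by omega))) (mul_pos hv1 hq)
  rcases h.derivCoeffs_pos_cases hv (by omega) hi with ⟨hv0, hqi⟩ | ⟨hv1, hqi⟩ <;>
    rcases h.derivCoeffs_pos_cases hv hk hk' with ⟨hv0', hqk⟩ | ⟨hv1', hqk⟩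
  · exact left_pos hv0 (h.pos_of_le_of_le (by omega) (by omega) (by omega) hqi hqk)
  · exact left_pos hv0 (h.pos_of_le_of_le (by omega) (by omega) (by omega) hqi hqk)
  · exact left_pos hv0' (h.pos_of_le_of_le (by omega) (by omega) (by omega) hqi hqk)
  · exact right_pos hv1 (h.pos_of_le_of_le (by omega) (by omega) (by omega) hqi hqk)

lemma derivCoeffs_mul_le_sq (h : IsLogConcaveNoInternalZeros (m + 1) q) {v : Fin 2 → ℝ}
    (hv : ∀ i, 0 ≤ v i) {a : ℕ} (ha : a + 2 ≤ m) :
    derivCoeffs v q a * derivCoeffs v q (a + 2) ≤ derivCoeffs v q (a + 1) ^ 2 := by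
  have h0 := h.mul_le_sq a (by omega)
  have h1 := h.mul_le_sq (a + 1) (by omega)
  have hinner := h.mul_le_mul_inner (a := a) (by omega)
  unfold derivCoeffs
  linear_combination v 0 ^ 2 * h1 + v 1 ^ 2 * h0 +
    mul_le_mul_of_nonneg_left hinner (mul_nonneg (hv 0) (hv 1))

lemma derivCoeffs (h : IsLogConcaveNoInternalZeros (m + 1) q) {v : Fin 2 → ℝ}
    (hv : ∀ i, 0 ≤ v i) : IsLogConcaveNoInternalZeros m (derivCoeffs v q) where
  nonneg _ hl := h.derivCoeffs_nonneg hv hl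
  noInternalZeros _ _ _ hij hjk hk hi hk' := h.derivCoeffs_noInternalZeros hv hij hjk hk hi hk'
  mul_le_sq _ ha := h.derivCoeffs_mul_le_sq hv ha

end IsLogConcaveNoInternalZeros

lemma dirDeriv_normalizedForm_zero (v : Fin 2 → ℝ) (q : ℕ → ℝ) :
    dirDeriv v (normalizedForm 0 q) = 0 := by
  simp [normalizedForm, dirDeriv]

lemma dirDeriv_dirDeriv_normalizedForm_of_le_one (u w : Fin 2 → ℝ) {m : ℕ} (hm : m ≤ 1)
    (q : ℕ → ℝ) : dirDeriv u (dirDeriv w (normalizedForm m q)) = 0 := by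
  interval_cases m
  · rw [dirDeriv_normalizedForm_zero]
    simp [dirDeriv]
  · rw [dirDeriv_normalizedForm w 0, dirDeriv_normalizedForm_zero]

lemma eval_dirDeriv_dirDeriv_normalizedForm_two (u w : Fin 2 → ℝ) (q : ℕ → ℝ) :
    eval (fun _ => (0 : ℝ)) (dirDeriv u (dirDeriv w (normalizedForm 2 q))) =
      u 0 * (w 0 * q 2 + w 1 * q 1) + u 1 * (w 0 * q 1 + w 1 * q 0) := by
  rw [dirDeriv_normalizedForm w 1, dirDeriv_normalizedForm u 0]
  simp [normalizedForm, derivCoeffs]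

lemma lorentzian_normalizedForm_two {q : ℕ → ℝ} (hq : q 0 * q 2 ≤ q 1 ^ 2)
    (u w : Fin 2 → ℝ) :
    eval (fun _ => (0 : ℝ)) (dirDeriv u (dirDeriv u (normalizedForm 2 q))) *
        eval (fun _ => (0 : ℝ)) (dirDeriv w (dirDeriv w (normalizedForm 2 q))) ≤
      (eval (fun _ => (0 : ℝ)) (dirDeriv u (dirDeriv w (normalizedForm 2 q)))) ^ 2 := by
  simp only [eval_dirDeriv_dirDeriv_normalizedForm_two]
  linear_combination (u 0 * w 1 - u 1 * w 0) ^ 2 * hq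

lemma exists_foldl_dirDeriv_normalizedForm {d : ℕ} {p : ℕ → ℝ}
    (hp : IsLogConcaveNoInternalZeros d p) {v : ℕ → Fin 2 → ℝ} (hv : ∀ e i, 0 ≤ v e i) {n : ℕ}
    (hn : n ≤ d) :
    ∃ q, IsLogConcaveNoInternalZeros (d - n) q ∧
      (List.range n).foldl (fun acc e => dirDeriv (v e) acc) (normalizedForm d p) =
        normalizedForm (d - n) q := by
  induction n with
  | zero => exact ⟨p, hp, rfl⟩
  | succ n ih =>
    obtain ⟨q, hq, hfold⟩ := ih (by omega)
    have hd : d - n = d - (n + 1) + 1 := by omega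
    rw [hd] at hq hfold
    refine ⟨derivCoeffs (v n) q, hq.derivCoeffs (hv n), ?_⟩
    rw [List.range_succ, List.foldl_append, hfold, List.foldl_cons, List.foldl_nil,
      dirDeriv_normalizedForm]

theorem stmt13 (d : ℕ) (p : ℕ → ℝ)
    (hp : ∀ a, a ≤ d → 0 ≤ p a)
    (hniz : ∀ i j k, i < j → j < k → k ≤ d → 0 < p i → 0 < p k → 0 < p j)
    (hlc : ∀ a, 0 < a → a < d → p (a - 1) * p (a + 1) ≤ p a ^ 2) :
    ∀ u w : Fin 2 → ℝ, (∀ i, 0 ≤ u i) → (∀ i, 0 ≤ w i) →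
    ∀ v : ℕ → Fin 2 → ℝ, (∀ e i, 0 ≤ v e i) →
    let f : MvPolynomial (Fin 2) ℝ := ∑ a ∈ Finset.range (d + 1),
      C (p a / ((a.factorial : ℝ) * ((d - a).factorial : ℝ))) * X 0 ^ a * X 1 ^ (d - a)
    let g : MvPolynomial (Fin 2) ℝ :=
      (List.range (d - 2)).foldl (fun acc e => dirDeriv (v e) acc) f
    eval (fun _ => (0 : ℝ)) (dirDeriv u (dirDeriv u g)) *
        eval (fun _ => (0 : ℝ)) (dirDeriv w (dirDeriv w g)) ≤
      (eval (fun _ => (0 : ℝ)) (dirDeriv u (dirDeriv w g))) ^ 2 := by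
  intro u w _ _ v hv f g
  have hf : IsLogConcaveNoInternalZeros d p :=
    ⟨hp, hniz, fun a ha => by simpa using hlc (a + 1) (by omega) (by omega)⟩
  obtain ⟨q, hq, hg⟩ := exists_foldl_dirDeriv_normalizedForm hf hv (n := d - 2) (by omega)
  change g = _ at hg
  rw [hg]
  rcases le_or_gt d 1 with hd | hd
  · simp [dirDeriv_dirDeriv_normalizedForm_of_le_one _ _ (by omega : d - (d - 2) ≤ 1)]
  · have h2 : d - (d - 2) = 2 := by omega
    rw [h2] at hq ⊢
    exact lorentzian_normalizedForm_two (hq.mul_le_sq 0 le_rfl) u w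
end
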